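/- arXiv:1206.0225 — 3 statements merged into one kernel-verified Lean document; each statement's English description precedes it below -/
import Mathlib

section
/- Let Φ_k : ℂ^k → ℂ^k be the map whose j-th component is Σ_{i=1}^k |w_i|^{1-j} w_i^j (with the convention that the term is 0 when w_i = 0), and let R_k = {w ∈ ℂ^k : |w₁| + ⋯ + |w_k| < 1}. Then the Brouwer degree of Φ_k relative to R_k with respect to 0 equals k!, and in particular Φ_k(w) = 0 if and only if w = 0. -/
open Set

/-- An (axiomatic) Brouwer degree theory for continuous maps of `ℂ^k ≃ ℝ^{2k}`,
relative to bounded open sets, with respect to a point: normalization, additivity,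
homotopy invariance and the solution property. The Brouwer degree is the unique
such theory. -/
structure DegreeTheory (k : ℕ) where
  deg : ((Fin k → ℂ) → (Fin k → ℂ)) → Set (Fin k → ℂ) → (Fin k → ℂ) → ℤ
  normalization : ∀ (U : Set (Fin k → ℂ)) (y : Fin k → ℂ),
    IsOpen U → Bornology.IsBounded U → y ∈ U → deg id U y = 1
  additivity : ∀ (f : (Fin k → ℂ) → (Fin k → ℂ)) (U U₁ U₂ : Set (Fin k → ℂ))
    (y : Fin k → ℂ), IsOpen U → Bornology.IsBounded U → IsOpen U₁ → IsOpen U₂ →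
    Disjoint U₁ U₂ → U₁ ∪ U₂ ⊆ U → Continuous f →
    (∀ x ∈ closure U \ (U₁ ∪ U₂), f x ≠ y) →
    deg f U y = deg f U₁ y + deg f U₂ y
  homotopy_invariance : ∀ (H : ℝ → (Fin k → ℂ) → (Fin k → ℂ))
    (U : Set (Fin k → ℂ)) (y : Fin k → ℂ),
    IsOpen U → Bornology.IsBounded U →
    Continuous (fun p : ℝ × (Fin k → ℂ) => H p.1 p.2) →
    (∀ t ∈ Icc (0:ℝ) 1, ∀ x ∈ frontier U, H t x ≠ y) →
    deg (H 0) U y = deg (H 1) U y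
  solution : ∀ (f : (Fin k → ℂ) → (Fin k → ℂ)) (U : Set (Fin k → ℂ))
    (y : Fin k → ℂ), IsOpen U → Bornology.IsBounded U → Continuous f →
    (∀ x ∈ frontier U, f x ≠ y) → deg f U y ≠ 0 → ∃ x ∈ U, f x = y

/-- The map `Φ_k : ℂ^k → ℂ^k` whose `j`-th component (`j = 1, …, k`) is
`Σ_{i=1}^k |w_i|^{1-j} w_i^j`, with the convention that a term vanishes when
`w_i = 0`. -/
noncomputable def PhiMap (k : ℕ) (w : Fin k → ℂ) : Fin k → ℂ := fun j =>
  ∑ i, if w i = 0 then 0 else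
    ((‖w i‖ : ℂ)) ^ ((1 : ℤ) - (((j : ℕ) : ℤ) + 1)) * w i ^ ((j : ℕ) + 1)

/-!
The maps `Φ_k` and `P(w)_j = Σ_i w_i^(j+1)` are joined by the homotopy
`H_t(w)_j = Σ_i w_i^(j+1) / ((1 - t)|w_i| + t)^j`. Writing `ρ_i = (1 - t)|w_i| + t` and
`ζ_i = w_i / ρ_i`, each component is the weighted power sum `Σ_i ρ_i ζ_i^(j+1)` with positive
weights; grouping equal `ζ_i`, a Vandermonde system forces `ζ = 0`, so `H_t` vanishes only at `0`.
In particular `Φ_k` and `P` have the same degree on the `ℓ¹` unit ball.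

To count `deg P`, shift the value `0` to a nearby regular value `P(ξ)`, `ξ` with distinct
coordinates. By Newton's identities the solutions of `P(w) = P(ξ)` are the `k!` permutations
of `ξ`, at which the Jacobian `diag(j + 1) · Vandermonde` is invertible. Each of them has local
degree `1`: the map is homotopic near the root to its complex linearization, which is joined to
the identity inside the path-connected group `GL_k(ℂ)`.
-/

open Filter Topology Metric Bornology Polynomial Matrix

theorem Matrix.exists_path_to_one_of_det_ne_zero {n : Type*} [Fintype n] [DecidableEq n]
    {M : Matrix n n ℂ} (hM : M.det ≠ 0) :
    ∃ A : ℝ → Matrix n n ℂ, Continuous A ∧ A 0 = M ∧ A 1 = 1 ∧ ∀ t, (A t).det ≠ 0 := by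
  set q : ℂ[X] := (M.map C + (X : ℂ[X]) • (1 - M).map C).det
  have hq : ∀ z, q.eval z = (M + z • (1 - M)).det := fun z => by
    rw [← coe_evalRingHom, RingHom.map_det]
    congr 1
    ext i j
    simp
  have hq0 : q ≠ 0 := fun h => hM (by simpa [h] using (hq 0).symm)
  -- `z ↦ M + z • (1 - M)` meets the singular matrices only at the finitely many roots of `q`
  have hconn : IsPathConnected {z : ℂ | q.eval z ≠ 0} :=
    (Polynomial.finite_setOfPred_isRoot hq0).countable.isPathConnected_compl_of_one_lt_rank
      (by rw [Complex.rank_real_complex]; norm_num)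
  obtain ⟨γ, hγ⟩ := hconn.joinedIn 0 (by simpa [hq] using hM) 1 (by simp [hq])
  refine ⟨fun t => M + γ.extend t • (1 - M), by fun_prop, by simp, by simp, fun t => ?_⟩
  rw [← hq]
  exact hγ _

namespace DegreeTheory

variable {k : ℕ} (D : DegreeTheory k) {f : (Fin k → ℂ) → (Fin k → ℂ)}
  {U : Set (Fin k → ℂ)} {y : Fin k → ℂ}

theorem deg_eq_of_homotopy {H : ℝ → (Fin k → ℂ) → (Fin k → ℂ)} (hU : IsOpen U)
    (hUb : IsBounded U)
    (hH : ContinuousOn (fun p : ℝ × (Fin k → ℂ) => H p.1 p.2) (Icc 0 1 ×ˢ univ))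
    (hne : ∀ t ∈ Icc (0 : ℝ) 1, ∀ x ∈ frontier U, H t x ≠ y) :
    D.deg (H 0) U y = D.deg (H 1) U y := by
  have hproj : Continuous fun t : ℝ => (projIcc 0 1 zero_le_one t : ℝ) :=
    continuous_subtype_val.comp continuous_projIcc
  simpa using D.homotopy_invariance (fun t => H (projIcc 0 1 zero_le_one t)) U y hU hUb
    (hH.comp_continuous ((hproj.comp continuous_fst).prodMk continuous_snd)
      fun p => ⟨Subtype.mem _, mem_univ _⟩)
    fun t _ => hne _ (Subtype.mem _)

theorem deg_empty (hf : Continuous f) : D.deg f ∅ y = 0 := by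
  have := D.additivity f ∅ ∅ ∅ y isOpen_empty isBounded_empty isOpen_empty isOpen_empty
    disjoint_bot_left (by simp) hf (by simp)
  omega

theorem deg_eq_of_subset {V : Set (Fin k → ℂ)} (hU : IsOpen U) (hUb : IsBounded U)
    (hV : IsOpen V) (hVU : V ⊆ U) (hf : Continuous f)
    (hzero : ∀ x ∈ closure U, f x = y → x ∈ V) : D.deg f U y = D.deg f V y := by
  have := D.additivity f U V ∅ y hU hUb hV isOpen_empty disjoint_bot_right (by simpa using hVU)
    hf fun x hx hfx => hx.2 (Or.inl (hzero x hx.1 hfx))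
  rw [this, D.deg_empty hf, add_zero]

theorem deg_eq_sum {ι : Type*} (s : Finset ι) (V : ι → Set (Fin k → ℂ)) (hU : IsOpen U)
    (hUb : IsBounded U) (hV : ∀ i ∈ s, IsOpen (V i)) (hVU : ∀ i ∈ s, V i ⊆ U)
    (hdisj : (s : Set ι).PairwiseDisjoint V) (hf : Continuous f)
    (hzero : ∀ x ∈ closure U, f x = y → ∃ i ∈ s, x ∈ V i) :
    D.deg f U y = ∑ i ∈ s, D.deg f (V i) y := by
  classical
  induction s using Finset.induction generalizing U with
  | empty =>
    simp only [Finset.notMem_empty, false_and, exists_false, imp_false] at hzero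
    rw [D.deg_eq_of_subset hU hUb isOpen_empty (empty_subset U) hf fun x hx hfx =>
      (hzero x hx hfx).elim, D.deg_empty hf, Finset.sum_empty]
  | insert a s ha ih =>
    simp only [Finset.mem_insert, forall_eq_or_imp, exists_eq_or_imp] at hV hVU hzero
    rw [Finset.coe_insert, Set.pairwiseDisjoint_insert_of_notMem (by exact_mod_cast ha)]
      at hdisj
    set W := ⋃ i ∈ s, V i
    have hW : IsOpen W := isOpen_biUnion hV.2
    have hWU : W ⊆ U := iUnion₂_subset hVU.2
    have haW : Disjoint (V a) W := disjoint_iUnion₂_right.2 hdisj.2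
    rw [Finset.sum_insert ha, D.additivity f U (V a) W y hU hUb hV.1 hW haW
      (union_subset hVU.1 hWU) hf ?_,
      ih hW (hUb.subset hWU) hV.2 (fun i hi => subset_biUnion_of_mem hi) hdisj.1]
    · intro x hx hfx
      rcases hzero x (closure_mono hWU hx) hfx with hxa | hxs
      · exact absurd hx ((haW.closure_right hV.1).notMem_of_mem_left hxa)
      · exact hxs
    · rintro x ⟨hx, hxV⟩ hfx
      rcases hzero x hx hfx with hxa | ⟨i, hi, hxi⟩
      · exact hxV (Or.inl hxa)
      · exact hxV (Or.inr (mem_biUnion hi hxi))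

theorem deg_sub_const {ξ : Fin k → ℂ} (hU : IsOpen U) (hUb : IsBounded U) (hξ : ξ ∈ U) :
    D.deg (· - ξ) U 0 = 1 := by
  obtain ⟨R, hUR⟩ := hUb.subset_ball 0
  have hξR : ‖ξ‖ < R := mem_ball_zero_iff.1 (hUR hξ)
  rw [← D.deg_eq_of_subset isOpen_ball isBounded_ball hU hUR (by fun_prop)
    fun x _ hx => by rwa [sub_eq_zero.1 hx]]
  have hne : ∀ t ∈ Icc (0 : ℝ) 1, ∀ x ∈ frontier (ball (0 : Fin k → ℂ) R),
      x - (1 - t) • ξ ≠ 0 := by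
    intro t ht x hx hx0
    rw [frontier_ball _ (norm_nonneg ξ |>.trans_lt hξR).ne', mem_sphere_zero_iff_norm,
      sub_eq_zero.1 hx0, norm_smul, Real.norm_of_nonneg (sub_nonneg.2 ht.2)] at hx
    nlinarith [norm_nonneg ξ, ht.1]
  have := D.deg_eq_of_homotopy (H := fun t x => x - (1 - t) • ξ) isOpen_ball isBounded_ball
    (by fun_prop) hne
  simp only [sub_zero, one_smul, sub_self, zero_smul] at this
  rw [this]
  exact D.normalization _ 0 isOpen_ball isBounded_ball (mem_ball_self (by linarith [norm_nonneg ξ]))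

theorem deg_mulVec_sub {M : Matrix (Fin k) (Fin k) ℂ} (hM : M.det ≠ 0) {ξ : Fin k → ℂ}
    (hU : IsOpen U) (hUb : IsBounded U) (hξ : ξ ∈ U) :
    D.deg (fun x => M *ᵥ (x - ξ)) U 0 = 1 := by
  obtain ⟨A, hA, hA0, hA1, hAdet⟩ := Matrix.exists_path_to_one_of_det_ne_zero hM
  have hne : ∀ t ∈ Icc (0 : ℝ) 1, ∀ x ∈ frontier U, A t *ᵥ (x - ξ) ≠ 0 := by
    intro t _ x hx hx0
    rw [sub_eq_zero.1 (Matrix.eq_zero_of_mulVec_eq_zero (hAdet t) hx0)] at hx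
    exact (disjoint_frontier_iff_isOpen.2 hU).notMem_of_mem_left hx hξ
  have := D.deg_eq_of_homotopy (H := fun t x => A t *ᵥ (x - ξ)) hU hUb
    (Continuous.continuousOn <| by fun_prop) hne
  simp only [hA0, hA1, Matrix.one_mulVec] at this
  rw [this, D.deg_sub_const hU hUb hξ]

theorem eventually_deg_ball_eq_one {M : Matrix (Fin k) (Fin k) ℂ} (hM : M.det ≠ 0)
    {ξ : Fin k → ℂ} (hf : Continuous f) (hfξ : f ξ = 0)
    (hf' : HasFDerivAt f (LinearMap.toContinuousLinearMap M.mulVecLin) ξ) :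
    ∀ᶠ r in 𝓝[>] 0, D.deg f (ball ξ r) 0 = 1 := by
  obtain ⟨K, hK, hanti⟩ :=
    M.mulVecLin.injective_iff_antilipschitz.1 (Matrix.mulVec_injective_of_det_ne_zero hM)
  have hbound : ∀ v, ‖v‖ ≤ (K : ℝ) * ‖M *ᵥ v‖ := ZeroHomClass.bound_of_antilipschitz _ hanti
  set C : ℝ := (K : ℝ)
  have hC : 0 < C := hK
  have hlin : ∀ᶠ x in 𝓝 ξ, ‖f x - M *ᵥ (x - ξ)‖ ≤ (2 * C)⁻¹ * ‖x - ξ‖ := by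
    simpa [hfξ] using hf'.isLittleO.def (by positivity : 0 < (2 * C)⁻¹)
  obtain ⟨ε, hε, hball⟩ := Metric.eventually_nhds_iff_ball.1 hlin
  filter_upwards [Ioo_mem_nhdsGT hε] with r hr
  have hne : ∀ t ∈ Icc (0 : ℝ) 1, ∀ x ∈ frontier (ball ξ r),
      M *ᵥ (x - ξ) + t • (f x - M *ᵥ (x - ξ)) ≠ 0 := by
    intro t ht x hx hx0
    rw [frontier_ball _ hr.1.ne', mem_sphere_iff_norm] at hx
    have hsmall : ‖M *ᵥ (x - ξ)‖ ≤ (2 * C)⁻¹ * r := by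
      rw [eq_neg_of_add_eq_zero_left hx0, norm_neg, norm_smul, Real.norm_of_nonneg ht.1, ← hx]
      exact (mul_le_of_le_one_left (norm_nonneg _) ht.2).trans
        (hball x (mem_ball_iff_norm.2 (hx ▸ hr.2)))
    have := (hx ▸ hbound (x - ξ)).trans (mul_le_mul_of_nonneg_left hsmall hC.le)
    rw [show C * ((2 * C)⁻¹ * r) = r / 2 by field_simp] at this
    linarith [hr.1]
  have := D.deg_eq_of_homotopy (H := fun t x => M *ᵥ (x - ξ) + t • (f x - M *ᵥ (x - ξ)))
    isOpen_ball isBounded_ball (Continuous.continuousOn <| by fun_prop) hne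
  simp only [zero_smul, add_zero, one_smul, add_sub_cancel] at this
  rw [← this, D.deg_mulVec_sub hM isOpen_ball isBounded_ball (mem_ball_self hr.1)]

theorem deg_eq_card_of_eventually_deg_ball_eq_one {ι : Type*} [Fintype ι] {x : ι → Fin k → ℂ}
    (hx : Function.Injective x) (hU : IsOpen U) (hUb : IsBounded U) (hxU : ∀ i, x i ∈ U)
    (hf : Continuous f) (hzero : ∀ z ∈ closure U, f z = 0 → ∃ i, z = x i)
    (hloc : ∀ i, ∀ᶠ r in 𝓝[>] 0, D.deg f (ball (x i) r) 0 = 1) :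
    D.deg f U 0 = Fintype.card ι := by
  have hsub : ∀ i, ∀ᶠ r in 𝓝[>] (0 : ℝ), ball (x i) r ⊆ U := fun i => by
    obtain ⟨ε, hε, hεU⟩ := Metric.isOpen_iff.1 hU _ (hxU i)
    filter_upwards [Ioo_mem_nhdsGT hε] with r hr using (ball_subset_ball hr.2.le).trans hεU
  have hdisj : ∀ i j, i ≠ j → ∀ᶠ r in 𝓝[>] (0 : ℝ), Disjoint (ball (x i) r) (ball (x j) r) :=
    fun i j hij => by
      filter_upwards [Ioo_mem_nhdsGT (half_pos (dist_pos.2 (hx.ne hij)))] with r hr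
      exact ball_disjoint_ball (by linarith [hr.2])
  obtain ⟨r, hdeg, hsub, hdisj, hr⟩ := ((eventually_all.2 hloc).and <|
    (eventually_all.2 hsub).and <| (eventually_all.2 fun i => eventually_all.2 fun j =>
      eventually_imp_distrib_left.2 (hdisj i j)).and self_mem_nhdsWithin).exists
  rw [D.deg_eq_sum Finset.univ (fun i => ball (x i) r) hU hUb (fun i _ => isOpen_ball)
    (fun i _ => hsub i) (fun i _ j _ hij => hdisj i j hij) hf fun z hz hfz => ?_]
  · simp [hdeg]
  · obtain ⟨i, rfl⟩ := hzero z hz hfz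
    exact ⟨i, Finset.mem_univ i, mem_ball_self hr⟩

end DegreeTheory

theorem eq_zero_of_forall_sum_mul_pow_succ_eq_zero {ι : Type*} [Fintype ι] {b : ι → ℝ}
    {z : ι → ℂ} (hb : ∀ i, z i ≠ 0 → 0 < b i)
    (h : ∀ j < Fintype.card ι, ∑ i, (b i : ℂ) * z i ^ (j + 1) = 0) : z = 0 := by
  classical
  set S := Finset.univ.image z
  -- grouping the `i` with equal `z i` gives a Vandermonde system at the distinct nodes
  set c : ℂ → ℂ := fun w => ((∑ i with z i = w, b i : ℝ) : ℂ) * w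
  have hsum : ∀ j, ∑ w ∈ S, c w * w ^ j = ∑ i, (b i : ℂ) * z i ^ (j + 1) := fun j =>
    Finset.sum_image' _ fun i _ => by
      simp only [c, Complex.ofReal_sum, Finset.sum_mul]
      refine Finset.sum_congr rfl fun i' hi' => ?_
      rw [(Finset.mem_filter.1 hi').2]
      ring
  have hc : ∀ w ∈ S, c w = 0 := by
    let e := S.equivFin.symm
    have := Matrix.eq_zero_of_forall_pow_sum_mul_pow_eq_zero (f := fun m => (e m : ℂ))
      (v := fun m => c (e m)) (fun m m' hm => e.injective (Subtype.ext hm)) fun m => by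
        rw [e.sum_comp (fun w : S => c w * (w : ℂ) ^ (m : ℕ)),
          Finset.sum_coe_sort S (fun w => c w * w ^ (m : ℕ)), hsum]
        exact h m (m.2.trans_le (Finset.card_image_le.trans (by simp)))
    intro w hw
    simpa using congrFun this (e.symm ⟨w, hw⟩)
  funext i
  by_contra hzi
  have hpos : 0 < ∑ i' with z i' = z i, b i' :=
    Finset.sum_pos (fun i' hi' => hb i' ((Finset.mem_filter.1 hi').2 ▸ hzi)) ⟨i, by simp⟩
  have := hc (z i) (Finset.mem_image_of_mem z (Finset.mem_univ i))
  simp only [c, mul_eq_zero, Complex.ofReal_eq_zero] at this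
  exact this.elim hpos.ne' hzi

noncomputable def phiHomotopyTerm (n : ℕ) (t : ℝ) (z : ℂ) : ℂ :=
  z ^ (n + 1) / (((1 - t) * ‖z‖ + t : ℝ) : ℂ) ^ n

theorem phiHomotopyTerm_zero (n : ℕ) (z : ℂ) : phiHomotopyTerm n 0 z =
    if z = 0 then 0 else (‖z‖ : ℂ) ^ ((1 : ℤ) - ((n : ℤ) + 1)) * z ^ (n + 1) := by
  split_ifs with hz
  · simp [phiHomotopyTerm, hz]
  · simp [phiHomotopyTerm, div_eq_inv_mul]

theorem phiHomotopyTerm_one (n : ℕ) (z : ℂ) : phiHomotopyTerm n 1 z = z ^ (n + 1) := by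
  simp [phiHomotopyTerm]

theorem phiHomotopyTerm_denom_pos {t : ℝ} (ht : t ∈ Icc (0 : ℝ) 1) {z : ℂ} (hz : z ≠ 0) :
    0 < (1 - t) * ‖z‖ + t := by
  rcases ht.1.eq_or_lt with rfl | ht0
  · simpa using hz
  · nlinarith [norm_nonneg z, ht.2]

theorem phiHomotopyTerm_eq {t : ℝ} (ht : t ∈ Icc (0 : ℝ) 1) (n : ℕ) (z : ℂ) :
    phiHomotopyTerm n t z = (((1 - t) * ‖z‖ + t : ℝ) : ℂ) *
      (z / (((1 - t) * ‖z‖ + t : ℝ) : ℂ)) ^ (n + 1) := by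
  rcases eq_or_ne z 0 with rfl | hz
  · simp [phiHomotopyTerm]
  · have hρ : (((1 - t) * ‖z‖ + t : ℝ) : ℂ) ≠ 0 := by
      exact_mod_cast (phiHomotopyTerm_denom_pos ht hz).ne'
    rw [phiHomotopyTerm]
    generalize (((1 - t) * ‖z‖ + t : ℝ) : ℂ) = ρ at hρ ⊢
    rw [div_pow, pow_succ ρ n]
    field_simp

theorem norm_phiHomotopyTerm_le {t : ℝ} (ht : t ∈ Icc (0 : ℝ) 1) (n : ℕ) {z : ℂ}
    (hz : ‖z‖ ≤ 1) : ‖phiHomotopyTerm n t z‖ ≤ ‖z‖ := by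
  rcases eq_or_ne z 0 with rfl | hz0
  · simp [phiHomotopyTerm]
  have hpos := norm_pos_iff.2 hz0
  have hρ : ‖z‖ ≤ (1 - t) * ‖z‖ + t := by nlinarith [ht.1]
  rw [phiHomotopyTerm, norm_div, norm_pow, norm_pow, Complex.norm_real,
    Real.norm_of_nonneg (hpos.le.trans hρ), div_le_iff₀ (pow_pos (hpos.trans_le hρ) n), pow_succ,
    mul_comm]
  exact mul_le_mul_of_nonneg_left (pow_le_pow_left₀ hpos.le hρ n) hpos.le

theorem continuousOn_phiHomotopyTerm (n : ℕ) :
    ContinuousOn (fun p : ℝ × ℂ => phiHomotopyTerm n p.1 p.2) (Icc 0 1 ×ˢ univ) := by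
  rintro ⟨t, z⟩ ⟨ht, -⟩
  rcases eq_or_ne z 0 with rfl | hz
  · -- at `z = 0` the denominator may vanish, but the term is bounded by `‖z‖`
    have hnear : ∀ᶠ p : ℝ × ℂ in 𝓝 (t, 0), ‖p.2‖ ≤ 1 :=
      (continuous_snd.norm.tendsto (t, (0 : ℂ))).eventually (eventually_le_nhds (by simp))
    have : Tendsto (fun p : ℝ × ℂ => phiHomotopyTerm n p.1 p.2)
        (𝓝[Icc 0 1 ×ˢ univ] (t, 0)) (𝓝 0) := by
      refine squeeze_zero_norm' ?_ (tendsto_nhdsWithin_of_tendsto_nhds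
        (by simpa using (continuous_snd.norm.tendsto (t, (0 : ℂ)))))
      filter_upwards [self_mem_nhdsWithin, nhdsWithin_le_nhds hnear] with p hp hp1
      exact norm_phiHomotopyTerm_le hp.1 n hp1
    have h0 : phiHomotopyTerm n t 0 = 0 := by simp [phiHomotopyTerm]
    unfold ContinuousWithinAt
    simpa only [h0] using this
  · have hden : (((1 - t) * ‖z‖ + t : ℝ) : ℂ) ^ n ≠ 0 :=
      pow_ne_zero _ (by exact_mod_cast (phiHomotopyTerm_denom_pos ht hz).ne')
    exact (ContinuousAt.div (f := fun p : ℝ × ℂ => p.2 ^ (n + 1))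
      (g := fun p : ℝ × ℂ => (((1 - p.1) * ‖p.2‖ + p.1 : ℝ) : ℂ) ^ n)
      (by fun_prop) (by fun_prop) hden).continuousWithinAt

noncomputable def phiHomotopy (k : ℕ) (t : ℝ) (w : Fin k → ℂ) : Fin k → ℂ :=
  fun j => ∑ i, phiHomotopyTerm j t (w i)

def powerSumMap (k : ℕ) (w : Fin k → ℂ) : Fin k → ℂ :=
  fun j => ∑ i, w i ^ ((j : ℕ) + 1)

@[simp]
theorem powerSumMap_zero (k : ℕ) : powerSumMap k 0 = 0 := by
  funext j
  simp [powerSumMap]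

theorem phiHomotopy_zero (k : ℕ) : phiHomotopy k 0 = PhiMap k := by
  funext w j
  simp only [phiHomotopy, PhiMap, phiHomotopyTerm_zero]

theorem phiHomotopy_one (k : ℕ) : phiHomotopy k 1 = powerSumMap k := by
  funext w j
  simp only [phiHomotopy, powerSumMap, phiHomotopyTerm_one]

theorem continuousOn_phiHomotopy (k : ℕ) :
    ContinuousOn (fun p : ℝ × (Fin k → ℂ) => phiHomotopy k p.1 p.2) (Icc 0 1 ×ˢ univ) := by
  refine continuousOn_pi.2 fun j => ?_
  simp only [phiHomotopy]
  refine continuousOn_finsetSum _ fun i _ => ?_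
  exact (continuousOn_phiHomotopyTerm j).comp (f := fun p : ℝ × (Fin k → ℂ) => (p.1, p.2 i))
    (by fun_prop) fun _ hp => ⟨hp.1, mem_univ _⟩

theorem phiHomotopy_ne_zero {k : ℕ} {t : ℝ} (ht : t ∈ Icc (0 : ℝ) 1) {w : Fin k → ℂ}
    (hw : w ≠ 0) : phiHomotopy k t w ≠ 0 := by
  intro h0
  set ρ : Fin k → ℝ := fun i => (1 - t) * ‖w i‖ + t
  -- each term is `ρ i * (w i / ρ i) ^ (j + 1)`, a weighted power sum
  have hζ := eq_zero_of_forall_sum_mul_pow_succ_eq_zero (b := ρ) (z := fun i => w i / ρ i)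
    (fun i hi => phiHomotopyTerm_denom_pos ht (left_ne_zero_of_mul (by exact hi)))
    fun j hj => by
      simpa [ρ, phiHomotopy, phiHomotopyTerm_eq ht] using congrFun h0 ⟨j, by simpa using hj⟩
  refine hw (funext fun i => ?_)
  rcases div_eq_zero_iff.1 (congrFun hζ i) with hwi | hρi
  · exact hwi
  · by_contra hwi
    exact (phiHomotopyTerm_denom_pos ht hwi).ne' (by exact_mod_cast hρi)

theorem phiMap_eq_zero_iff (k : ℕ) (w : Fin k → ℂ) : PhiMap k w = 0 ↔ w = 0 := by
  refine ⟨fun h => by_contra fun hw => ?_, fun h => ?_⟩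
  · exact phiHomotopy_ne_zero (left_mem_Icc.2 zero_le_one) hw (by rwa [phiHomotopy_zero])
  · funext j
    simp [PhiMap, h]

theorem MvPolynomial.aeval_esymm_eq_of_aeval_psum_eq {σ K : Type*} [Fintype σ] [Field K]
    [CharZero K] {x y : σ → K} {m : ℕ}
    (h : ∀ n, 1 ≤ n → n ≤ m → aeval x (psum σ K n) = aeval y (psum σ K n)) :
    ∀ n ≤ m, aeval x (esymm σ K n) = aeval y (esymm σ K n) := by
  intro n hn
  induction n using Nat.strong_induction_on with
  | _ n ih =>
    rcases n.eq_zero_or_pos with rfl | hn0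
    · simp
    have newton := fun v : σ → K => congrArg (aeval v) (mul_esymm_eq_sum σ K n)
    simp only [map_mul, map_sum, map_pow, map_neg, map_one, map_natCast] at newton
    refine mul_left_cancel₀ (Nat.cast_ne_zero.2 hn0.ne' : (n : K) ≠ 0) ?_
    rw [newton x, newton y]
    congr 1
    refine Finset.sum_congr rfl fun a ha => ?_
    obtain ⟨ha, hlt⟩ := Finset.mem_filter.1 ha
    have hsum := Finset.HasAntidiagonal.mem_antidiagonal.1 ha
    rw [ih a.1 hlt (by omega), h a.2 (by omega) (by omega)]

theorem Multiset.map_univ_eq_of_sum_pow_eq {ι K : Type*} [Fintype ι] [Field K] [CharZero K]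
    {x y : ι → K} (h : ∀ n, 1 ≤ n → n ≤ Fintype.card ι → ∑ i, x i ^ n = ∑ i, y i ^ n) :
    Finset.univ.val.map x = Finset.univ.val.map y := by
  have hesymm : ∀ n ≤ Fintype.card ι,
      (Finset.univ.val.map x).esymm n = (Finset.univ.val.map y).esymm n := fun n hn => by
    simp only [← MvPolynomial.aeval_esymm_eq_multiset_esymm ι K]
    exact MvPolynomial.aeval_esymm_eq_of_aeval_psum_eq
      (fun n h1 h2 => by simpa [MvPolynomial.psum] using h n h1 h2) n hn
  have hprod : ((Finset.univ.val.map x).map fun a => X - C a).prod =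
      ((Finset.univ.val.map y).map fun a => X - C a).prod := by
    simp only [prod_X_sub_X_eq_sum_esymm, card_map, Finset.card_val, Finset.card_univ]
    exact Finset.sum_congr rfl fun n hn => by
      rw [hesymm n (Nat.lt_succ_iff.1 (Finset.mem_range.1 hn))]
  simpa only [roots_multiset_prod_X_sub_C] using congrArg roots hprod

theorem exists_perm_eq_comp_of_map_univ_eq {ι α : Type*} [Fintype ι] {x y : ι → α}
    (hy : Function.Injective y) (h : Finset.univ.val.map x = Finset.univ.val.map y) :
    ∃ σ : Equiv.Perm ι, x = y ∘ σ := by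
  have hx : Function.Injective x := fun i j hij =>
    Multiset.inj_on_of_nodup_map (h ▸ Finset.univ.nodup.map hy) i (by simp) j (by simp) hij
  have hmem : ∀ i, ∃ j, y j = x i := fun i => by
    have := Multiset.mem_map_of_mem x (Finset.mem_univ_val i)
    rw [h] at this
    simpa using this
  choose g hg using hmem
  have hg_inj : Function.Injective g := fun i j hij => hx (by rw [← hg, ← hg, hij])
  exact ⟨Equiv.ofBijective g (Finite.injective_iff_bijective.1 hg_inj), funext fun i => (hg i).symm⟩

theorem powerSumMap_eq_iff {k : ℕ} {ξ : Fin k → ℂ} (hξ : Function.Injective ξ)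
    (w : Fin k → ℂ) : powerSumMap k w = powerSumMap k ξ ↔ ∃ σ : Equiv.Perm (Fin k), w = ξ ∘ σ := by
  refine ⟨fun h => exists_perm_eq_comp_of_map_univ_eq hξ
    (Multiset.map_univ_eq_of_sum_pow_eq fun n h1 h2 => ?_), ?_⟩
  · rw [Fintype.card_fin] at h2
    simpa [powerSumMap, Nat.sub_add_cancel h1] using congrFun h ⟨n - 1, by omega⟩
  · rintro ⟨σ, rfl⟩
    funext j
    exact Equiv.sum_comp σ (fun i => ξ i ^ ((j : ℕ) + 1))

def powerSumJacobian {k : ℕ} (ξ : Fin k → ℂ) : Matrix (Fin k) (Fin k) ℂ :=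
  Matrix.of fun j i => ((j : ℕ) + 1 : ℂ) * ξ i ^ (j : ℕ)

theorem det_powerSumJacobian_ne_zero {k : ℕ} {ξ : Fin k → ℂ} (hξ : Function.Injective ξ) :
    (powerSumJacobian ξ).det ≠ 0 := by
  have : powerSumJacobian ξ =
      Matrix.of fun j i : Fin k => ((j : ℕ) + 1 : ℂ) * (vandermonde ξ)ᵀ j i := by
    ext j i
    simp [powerSumJacobian, vandermonde]
  rw [this, det_mul_column, det_transpose]
  exact mul_ne_zero (Finset.prod_ne_zero_iff.2 fun j _ => Nat.cast_add_one_ne_zero (j : ℕ))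
    (det_vandermonde_ne_zero_iff.2 hξ)

theorem hasFDerivAt_powerSumMap {k : ℕ} (ξ : Fin k → ℂ) :
    HasFDerivAt (powerSumMap k)
      (LinearMap.toContinuousLinearMap (powerSumJacobian ξ).mulVecLin) ξ := by
  refine hasFDerivAt_pi'.2 fun j => ?_
  have hterm : ∀ i, HasFDerivAt (fun w : Fin k → ℂ => w i ^ ((j : ℕ) + 1))
      ((((j : ℕ) + 1 : ℂ) * ξ i ^ (j : ℕ)) • ContinuousLinearMap.proj i) ξ := fun i => by
    have hpow : HasDerivAt (fun z : ℂ => z ^ ((j : ℕ) + 1)) (((j : ℕ) + 1 : ℂ) * ξ i ^ (j : ℕ))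
        (ξ i) := by simpa using hasDerivAt_pow ((j : ℕ) + 1) (ξ i)
    simpa [Function.comp_def] using hpow.comp_hasFDerivAt ξ
      (ContinuousLinearMap.proj (R := ℂ) (φ := fun _ : Fin k => ℂ) i).hasFDerivAt
  convert HasFDerivAt.fun_sum fun i (_ : i ∈ Finset.univ) => hterm i using 1
  · rfl
  · ext v
    simp [powerSumJacobian, mulVec, dotProduct, mul_comm]

section l1Ball

variable {ι E : Type*} [Fintype ι] [NormedAddCommGroup E]

theorem isOpen_setOf_sum_norm_lt_one : IsOpen {w : ι → E | ∑ i, ‖w i‖ < 1} :=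
  isOpen_lt (by fun_prop) continuous_const

theorem isBounded_setOf_sum_norm_lt_one : IsBounded {w : ι → E | ∑ i, ‖w i‖ < 1} :=
  isBounded_closedBall.subset fun w hw => mem_closedBall_zero_iff.2 <|
    (pi_norm_le_iff_of_nonneg zero_le_one).2 fun i =>
      (Finset.single_le_sum (fun j _ => norm_nonneg (w j)) (Finset.mem_univ i)).trans hw.le

theorem ne_zero_of_mem_frontier_setOf_sum_norm_lt_one {w : ι → E}
    (hw : w ∈ frontier {w : ι → E | ∑ i, ‖w i‖ < 1}) : w ≠ 0 := by
  rintro rfl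
  simpa using frontier_lt_subset_eq (by fun_prop) continuous_const hw

end l1Ball

theorem exists_injective_mem_of_mem_nhds_zero {k : ℕ} {s : Set (Fin k → ℂ)} (hs : s ∈ 𝓝 0) :
    ∃ ξ : Fin k → ℂ, Function.Injective ξ ∧ ξ ∈ s := by
  set v : Fin k → ℂ := fun i => (i : ℕ) + 1
  have hv : Tendsto (fun ε : ℝ => ε • v) (𝓝[>] 0) (𝓝 0) :=
    tendsto_nhdsWithin_of_tendsto_nhds
      (Continuous.tendsto' (f := fun ε : ℝ => ε • v) (by fun_prop) 0 0 (zero_smul ℝ v))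
  obtain ⟨ε, hεs, hε⟩ := ((hv.eventually hs).and self_mem_nhdsWithin).exists
  refine ⟨ε • v, fun i j hij => ?_, hεs⟩
  simpa [v, hε.ne', Fin.ext_iff] using hij

theorem DegreeTheory.deg_powerSumMap {k : ℕ} (D : DegreeTheory k) :
    D.deg (powerSumMap k) {w : Fin k → ℂ | ∑ i, ‖w i‖ < 1} 0 = (Nat.factorial k : ℤ) := by
  set R := {w : Fin k → ℂ | ∑ i, ‖w i‖ < 1}
  have hRo : IsOpen R := isOpen_setOf_sum_norm_lt_one
  have hRb : IsBounded R := isBounded_setOf_sum_norm_lt_one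
  have hP : Continuous (powerSumMap k) := by unfold powerSumMap; fun_prop
  obtain ⟨c, hc, hcP⟩ : ∃ c, 0 < c ∧ ∀ x ∈ frontier R, c ≤ ‖powerSumMap k x‖ :=
    (hRb.isCompact_closure.of_isClosed_subset isClosed_frontier frontier_subset_closure)
      |>.exists_forall_le' hP.norm.continuousOn fun x hx => norm_pos_iff.2 <| by
        rw [← phiHomotopy_one]
        exact phiHomotopy_ne_zero (right_mem_Icc.2 zero_le_one)
          (ne_zero_of_mem_frontier_setOf_sum_norm_lt_one hx)
  -- a regular value `P ξ` of `P`, smaller than `P` on the frontier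
  obtain ⟨ξ, hξ, hξR, hξc⟩ : ∃ ξ : Fin k → ℂ, Function.Injective ξ ∧
      ξ ∈ R ∩ {x | ‖powerSumMap k x‖ < c} :=
    exists_injective_mem_of_mem_nhds_zero <|
      (hRo.inter (isOpen_lt hP.norm continuous_const)).mem_nhds ⟨by simp [R], by simpa using hc⟩
  have hdeg : D.deg (powerSumMap k) R 0 = D.deg (powerSumMap k · - powerSumMap k ξ) R 0 := by
    have := D.deg_eq_of_homotopy (H := fun t w => powerSumMap k w - t • powerSumMap k ξ) hRo hRb
      (Continuous.continuousOn <| by fun_prop) fun t ht x hx h0 => by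
        have := (hcP x hx).trans_eq (congrArg norm (sub_eq_zero.1 h0))
        rw [norm_smul, Real.norm_of_nonneg ht.1] at this
        exact (mul_le_of_le_one_left (norm_nonneg _) ht.2).not_gt (hξc.trans_le this)
    simpa using this
  have hf : Continuous fun w => powerSumMap k w - powerSumMap k ξ := hP.sub continuous_const
  have hzero : ∀ σ : Equiv.Perm (Fin k), powerSumMap k (ξ ∘ σ) - powerSumMap k ξ = 0 :=
    fun σ => sub_eq_zero.2 ((powerSumMap_eq_iff hξ _).2 ⟨σ, rfl⟩)
  rw [hdeg, D.deg_eq_card_of_eventually_deg_ball_eq_one (x := fun σ : Equiv.Perm (Fin k) => ξ ∘ σ)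
    (fun σ τ h => Equiv.ext fun i => hξ (congrFun h i)) hRo hRb
    (fun σ => by simpa [R] using (Equiv.sum_comp σ (fun i => ‖ξ i‖)).trans_lt hξR)
    hf (fun z _ hz => (powerSumMap_eq_iff hξ z).1 (sub_eq_zero.1 hz))
    fun σ => D.eventually_deg_ball_eq_one (det_powerSumJacobian_ne_zero (hξ.comp σ.injective))
      hf (hzero σ) ((hasFDerivAt_powerSumMap _).sub_const _),
    Fintype.card_perm, Fintype.card_fin]

/-- Lemma 4 (deg-k) of Bartolucci–Malchiodi: the Brouwer degree of `Φ_k` on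
`R_k = {w : Σ_i |w_i| < 1}` with respect to `0` equals `k!`, and in particular
`Φ_k(w) = 0` if and only if `w = 0`. -/
theorem stmt_3 (k : ℕ) :
    (∀ D : DegreeTheory k,
      D.deg (PhiMap k) {w : Fin k → ℂ | ∑ i, ‖w i‖ < 1} 0 = (Nat.factorial k : ℤ)) ∧
    (∀ w : Fin k → ℂ, PhiMap k w = 0 ↔ w = 0) := by
  refine ⟨fun D => ?_, phiMap_eq_zero_iff k⟩
  rw [← phiHomotopy_zero, D.deg_eq_of_homotopy isOpen_setOf_sum_norm_lt_one
    isBounded_setOf_sum_norm_lt_one (continuousOn_phiHomotopy k) fun t ht x hx =>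
      phiHomotopy_ne_zero ht (ne_zero_of_mem_frontier_setOf_sum_norm_lt_one hx),
    phiHomotopy_one, D.deg_powerSumMap]
end

section
/- With Φ_k as above, writing Φ_k* : ℝ^{2k} → ℝ^{2k} for Φ_k in real coordinates, the Jacobian determinant det(DΦ_k*(Re w, Im w)) is nonzero at every point w ∈ ℂ^k such that all w_i ≠ 0 and all w_i are pairwise distinct arguments (i.e. w_i ≠ w_j for i ≠ j after normalization |w_i| ≠ 0, and the arguments θ_i are pairwise distinct). -/
open Polynomial Finset Complex ComplexConjugate

namespace Polynomial

section

variable {R : Type*} [CommRing R]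

theorem eval_eq_zero_and_eval_derivative_eq_zero_of_sq_dvd {p : R[X]} {a : R}
    (h : (X - C a) ^ 2 ∣ p) : p.eval a = 0 ∧ p.derivative.eval a = 0 := by
  obtain ⟨q, rfl⟩ := h
  simp [derivative_mul, derivative_pow]

end

variable {K : Type*} [Field K] {ι : Type*}

theorem reflect_one_X_sub_C {a : K} (ha : a ≠ 0) :
    reflect 1 (X - C a) = C (-a) * (X - C a⁻¹) := by
  rw [reflect_sub, reflect_C, reflect_one_X, mul_sub, ← C_mul, neg_mul, mul_inv_cancel₀ ha]
  simp only [C_neg, map_one, pow_one]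
  ring

theorem reflect_prod_X_sub_C (s : Finset ι) {u : ι → K} (hu : ∀ i, u i ≠ 0) :
    reflect #s (∏ i ∈ s, (X - C (u i))) = C (∏ i ∈ s, -u i) * ∏ i ∈ s, (X - C (u i)⁻¹) := by
  induction s using Finset.cons_induction with
  | empty => simp
  | cons a s ha ih =>
    rw [prod_cons, prod_cons, prod_cons, card_cons, add_comm,
      reflect_mul _ _ (natDegree_X_sub_C_le _) (natDegree_finsetProd_X_sub_C_eq_card s u).le, ih,
      reflect_one_X_sub_C (hu a), C_mul]
    ring

variable [Fintype ι]

noncomputable def hermiteFunctional (u c d : ι → K) : K[X] →ₗ[K] K :=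
  ∑ i, (c i • leval (u i) + d i • (leval (u i)).comp derivative)

theorem hermiteFunctional_apply (u c d : ι → K) (p : K[X]) :
    hermiteFunctional u c d p = ∑ i, (c i * p.eval (u i) + d i * p.derivative.eval (u i)) := by
  simp [hermiteFunctional]

theorem hermiteFunctional_eq_zero_of_sq_dvd {u c d : ι → K} {p : K[X]}
    (h : ∀ i, (X - C (u i)) ^ 2 ∣ p) : hermiteFunctional u c d p = 0 := by
  rw [hermiteFunctional_apply]
  refine sum_eq_zero fun i _ => ?_
  obtain ⟨h₀, h₁⟩ := eval_eq_zero_and_eval_derivative_eq_zero_of_sq_dvd (h i)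
  rw [h₀, h₁, mul_zero, mul_zero, add_zero]

theorem hermiteFunctional_eq_of_sq_dvd {u c d : ι → K} {p : K[X]} (j : ι)
    (h : ∀ i ≠ j, (X - C (u i)) ^ 2 ∣ p) :
    hermiteFunctional u c d p = c j * p.eval (u j) + d j * p.derivative.eval (u j) := by
  rw [hermiteFunctional_apply, sum_eq_single j (fun i _ hi => ?_) (by simp)]
  obtain ⟨h₀, h₁⟩ := eval_eq_zero_and_eval_derivative_eq_zero_of_sq_dvd (h i hi)
  rw [h₀, h₁, mul_zero, mul_zero, add_zero]

theorem eq_zero_of_hermiteFunctional_eq_zero [DecidableEq ι] {u c d : ι → K}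
    (hu : Function.Injective u)
    (h : ∀ p : K[X], p.natDegree < 2 * Fintype.card ι → hermiteFunctional u c d p = 0) :
    c = 0 ∧ d = 0 := by
  suffices ∀ j, c j = 0 ∧ d j = 0 from
    ⟨_root_.funext fun j => (this j).1, _root_.funext fun j => (this j).2⟩
  intro j
  set q := (∏ i ∈ univ.erase j, (X - C (u i))) ^ 2
  have hq_dvd (i : ι) (hi : i ≠ j) : (X - C (u i)) ^ 2 ∣ q :=
    pow_dvd_pow_of_dvd
      (dvd_prod_of_mem (fun i => X - C (u i)) (mem_erase.mpr ⟨hi, mem_univ i⟩)) 2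
  have hq_eval : q.eval (u j) ≠ 0 := by
    simp only [q, eval_pow, eval_prod, eval_sub, eval_X, eval_C]
    exact pow_ne_zero _ (prod_ne_zero_iff.mpr fun i hi =>
      sub_ne_zero.mpr (hu.ne (ne_of_mem_erase hi).symm))
  have hk : 0 < Fintype.card ι := Fintype.card_pos_iff.mpr ⟨j⟩
  have hq_deg : q.natDegree = 2 * (Fintype.card ι - 1) := by
    simp [q, natDegree_pow, card_erase_of_mem, mul_comm]
  have hd : d j = 0 := by
    have hdeg : ((X - C (u j)) * q).natDegree < 2 * Fintype.card ι :=
      (natDegree_mul_le.trans (by rw [natDegree_X_sub_C, hq_deg])).trans_lt (by omega)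
    have := h _ hdeg
    rw [hermiteFunctional_eq_of_sq_dvd j fun i hi => (hq_dvd i hi).mul_left _] at this
    simpa [derivative_mul, hq_eval] using this
  refine ⟨?_, hd⟩
  have := h q (by omega)
  rw [hermiteFunctional_eq_of_sq_dvd j hq_dvd, hd] at this
  simpa [hq_eval] using this

variable {M : Type*} [AddCommGroup M] [Module K M]

theorem linearMap_apply_eq_sum (L : K[X] →ₗ[K] M) {p : K[X]} {m : ℕ}
    (hp : p.natDegree ≤ m) : L p = ∑ N ∈ range (m + 1), p.coeff N • L (X ^ N) := by
  conv_lhs => rw [p.as_sum_range' (m + 1) (Nat.lt_succ_of_le hp)]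
  simp [← smul_X_eq_monomial]

theorem linearMap_apply_eq_zero_of_natDegree_le (L : K[X] →ₗ[K] M) {m k : ℕ} {q : K[X]}
    (hq : q.natDegree ≤ m) (hqk : q.coeff k ≠ 0) (hLq : L q = 0)
    (hL : ∀ N ≤ m, N ≠ k → L (X ^ N) = 0) {p : K[X]} (hp : p.natDegree ≤ m) : L p = 0 := by
  have hkm : k ≤ m := le_natDegree_of_ne_zero hqk |>.trans hq
  have hLk : L (X ^ k) = 0 := by
    rw [linearMap_apply_eq_sum L hq, sum_eq_single k (fun N hN hNk => by
      rw [hL N (Nat.lt_succ_iff.mp (mem_range.mp hN)) hNk, smul_zero]) (by simp; omega)] at hLq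
    exact (smul_eq_zero.mp hLq).resolve_left hqk
  rw [linearMap_apply_eq_sum L hp]
  refine sum_eq_zero fun N hN => ?_
  rcases eq_or_ne N k with rfl | hNk
  · rw [hLk, smul_zero]
  · rw [hL N (Nat.lt_succ_iff.mp (mem_range.mp hN)) hNk, smul_zero]

end Polynomial

section

variable {F : Type*} [NormedAddCommGroup F] [InnerProductSpace ℝ F]

theorem hasFDerivAt_norm_of_ne_zero {x : F} (hx : x ≠ 0) :
    HasFDerivAt (‖·‖) (‖x‖⁻¹ • innerSL ℝ x) x := by
  have h := (hasStrictFDerivAt_norm_sq x).hasFDerivAt.sqrt (by positivity)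
  simp only [Real.sqrt_sq (norm_nonneg _)] at h
  convert h using 1
  ext y
  simp
  field_simp [norm_ne_zero_iff.mpr hx]

end

namespace Complex

variable {ι : Type*} [Fintype ι]

theorem coeff_sq_prod_X_sub_C_ne_zero {u : ι → ℂ}
    (hu : ∀ i, ‖u i‖ = 1) : ((∏ i, (X - C (u i))) ^ 2).coeff (Fintype.card ι) ≠ 0 := by
  set k := Fintype.card ι
  set Q := ∏ i, (X - C (u i))
  have hu0 (i : ι) : u i ≠ 0 := norm_ne_zero_iff.mp (by simp [hu i])
  have hQ : reflect k Q = C (∏ i, -u i) * Q.map (starRingEnd ℂ) := by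
    simp only [Q, k, ← card_univ, reflect_prod_X_sub_C _ hu0, inv_eq_conj (hu _),
      Polynomial.map_prod]
    simp
  have hcoeff (j : ℕ) (hj : j ≤ k) : Q.coeff (k - j) = (∏ i, -u i) * conj (Q.coeff j) := by
    have := congr_arg (coeff · j) hQ
    simpa only [coeff_reflect, revAt_le hj, coeff_C_mul, coeff_map] using this
  have hsum :
      (Q ^ 2).coeff k = (∏ i, -u i) * ((∑ j ∈ range (k + 1), normSq (Q.coeff j) : ℝ) : ℂ) := by
    rw [sq, coeff_mul, Nat.sum_antidiagonal_eq_sum_range_succ_mk, ofReal_sum, mul_sum]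
    refine sum_congr rfl fun j hj => ?_
    rw [hcoeff j (Nat.lt_succ_iff.mp (mem_range.mp hj)), mul_left_comm, mul_conj]
  have hQk : Q.coeff k = 1 := by
    have := (monic_prod_of_monic univ _ fun i _ => monic_X_sub_C (u i)).coeff_natDegree
    rwa [natDegree_finsetProd_X_sub_C_eq_card, card_univ] at this
  rw [hsum]
  refine mul_ne_zero (prod_ne_zero_iff.mpr fun i _ => neg_ne_zero.mpr (hu0 i)) ?_
  refine ofReal_ne_zero.mpr (sum_pos' (fun j _ => normSq_nonneg _) ?_).ne'
  exact ⟨k, self_mem_range_succ k, by simp [hQk]⟩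

theorem sum_mul_zpow_eq_zero {u : ι → ℂ} (hu : ∀ i, ‖u i‖ = 1) {a b : ι → ℝ} {k : ℕ}
    (h : ∀ n : ℕ, 1 ≤ n → n ≤ k → ∑ i, (a i + I * n * b i) * u i ^ n = 0)
    {n : ℤ} (hn₀ : n ≠ 0) (hnk : |n| ≤ k) : ∑ i, (a i + I * n * b i) * u i ^ n = 0 := by
  obtain ⟨m, rfl | rfl⟩ := Int.eq_nat_or_neg n
  · simpa using h m (by omega) (by simpa using hnk)
  · have := congr_arg conj (h m (by omega) (by simpa using hnk))
    simp only [map_sum, map_mul, map_add, map_pow, conj_ofReal, conj_I, map_natCast,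
      map_zero] at this
    rw [← this]
    refine sum_congr rfl fun i _ => ?_
    rw [← inv_eq_conj (hu i), zpow_neg, zpow_natCast, inv_pow]
    push_cast
    ring

theorem eq_zero_of_sum_mul_pow_eq_zero {u : ι → ℂ} (hu : ∀ i, ‖u i‖ = 1)
    (hinj : Function.Injective u) {a b : ι → ℝ}
    (h : ∀ n : ℕ, 1 ≤ n → n ≤ Fintype.card ι → ∑ i, (a i + I * n * b i) * u i ^ n = 0) :
    a = 0 ∧ b = 0 := by
  classical
  set k := Fintype.card ι
  have hu₀ (i : ι) : u i ≠ 0 := norm_ne_zero_iff.mp (by simp [hu i])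
  -- chosen so that `c i * u ^ N + d i * N * u ^ (N - 1) = (a i + I (N - k) b i) * u ^ (N - k)`
  set c : ι → ℂ := fun i => (a i - I * k * b i) * u i ^ (-k : ℤ)
  set d : ι → ℂ := fun i => I * b i * u i ^ (1 - k : ℤ)
  set L := hermiteFunctional u c d
  have hL (N : ℕ) (hN : N ≤ 2 * k) (hNk : N ≠ k) : L (X ^ N) = 0 := by
    rw [hermiteFunctional_apply, ← sum_mul_zpow_eq_zero hu h (n := N - k) (by omega)
      (abs_le.mpr ⟨by omega, by omega⟩)]
    refine sum_congr rfl fun i _ => ?_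
    have hpow : u i ^ (-k : ℤ) * u i ^ N = u i ^ (N - k : ℤ) := by
      rw [← zpow_natCast, ← zpow_add₀ (hu₀ i), neg_add_eq_sub]
    have hpow' : (N : ℂ) * u i ^ (N - 1) * u i ^ (1 - k : ℤ) = N * u i ^ (N - k : ℤ) := by
      rcases N with _ | N
      · simp
      · rw [mul_assoc, ← zpow_natCast, ← zpow_add₀ (hu₀ i)]
        push_cast
        ring_nf
    simp only [c, d, eval_pow, eval_X, derivative_X_pow, eval_mul, eval_C]
    push_cast
    linear_combination (a i - I * k * b i) * hpow + (I * b i) * hpow'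
  set q := (∏ i, (X - C (u i))) ^ 2
  have hq_deg : q.natDegree ≤ 2 * k := by simp [q, natDegree_pow, mul_comm, k]
  have hLq : L q = 0 := hermiteFunctional_eq_zero_of_sq_dvd fun i =>
    pow_dvd_pow_of_dvd (dvd_prod_of_mem (fun i => X - C (u i)) (mem_univ i)) 2
  obtain ⟨hc, hd⟩ := eq_zero_of_hermiteFunctional_eq_zero hinj fun p hp =>
    linearMap_apply_eq_zero_of_natDegree_le L hq_deg (coeff_sq_prod_X_sub_C_ne_zero hu) hLq hL
      hp.le
  have hb : b = 0 := funext fun i => by simpa [d, hu₀ i, zpow_ne_zero] using congr_fun hd i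
  refine ⟨funext fun i => ?_, hb⟩
  simpa [c, hb, hu₀ i] using congr_fun hc i

noncomputable def polarPow (n : ℕ) (z : ℂ) : ℂ := (‖z‖ : ℂ) ^ ((1 : ℤ) - n) * z ^ n

noncomputable def polarPowDeriv (n : ℕ) (u : ℂ) : ℂ →L[ℝ] ℂ :=
  (reCLM.smulRight (u ^ n) + imCLM.smulRight (I * n * u ^ n)).comp
    (ContinuousLinearMap.mul ℝ ℂ (conj u))

theorem polarPowDeriv_apply (n : ℕ) (u v : ℂ) :
    polarPowDeriv n u v = ((conj u * v).re + I * n * (conj u * v).im) * u ^ n := by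
  simp [polarPowDeriv]
  ring

theorem hasFDerivAt_polarPow (n : ℕ) {z : ℂ} (hz : z ≠ 0) :
    HasFDerivAt (polarPow n) (polarPowDeriv n (z / ‖z‖)) z := by
  have hr : (‖z‖ : ℂ) ≠ 0 := ofReal_ne_zero.mpr (norm_ne_zero_iff.mpr hz)
  have hnorm := ofRealCLM.hasFDerivAt.comp z (hasFDerivAt_norm_of_ne_zero hz)
  have hzpow := (hasDerivAt_zpow ((1 : ℤ) - n) _ (Or.inl hr)).comp_hasFDerivAt z hnorm
  have hpow := (hasDerivAt_pow n z).comp_hasFDerivAt z (hasFDerivAt_id (𝕜 := ℝ) z)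
  refine (hzpow.mul hpow).congr_fderiv (ContinuousLinearMap.ext fun v => ?_)
  have hconj : conj (z / ‖z‖) * v = (conj z * v) / (‖z‖ : ℝ) := by
    rw [map_div₀, conj_ofReal]; ring
  simp only [add_apply, smul_apply, ContinuousLinearMap.comp_apply, ContinuousLinearMap.id_apply,
    innerSL_apply_apply, Complex.inner, ofRealCLM_apply, smul_eq_mul, polarPowDeriv_apply, hconj,
    div_ofReal_re, div_ofReal_im, Function.comp_apply, id, mul_comm v]
  set α := (conj z * v).re
  set β := (conj z * v).im
  have hv : v = z * (α + β * I) / (‖z‖ : ℂ) ^ 2 := by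
    rw [re_add_im, ← mul_assoc, mul_conj, normSq_eq_norm_sq]; push_cast; field_simp
  clear_value α β
  subst hv
  push_cast
  generalize (‖z‖ : ℂ) = r at hr ⊢
  rcases n with _ | m
  · simp
    field_simp
  · rw [show (1 : ℤ) - (m + 1 : ℕ) = -m by push_cast; ring,
      show (-m : ℤ) - 1 = -(m + 1 : ℕ) by push_cast; ring, zpow_neg, zpow_neg, zpow_natCast,
      zpow_natCast, Nat.add_sub_cancel]
    push_cast
    rw [div_pow]
    field_simp
    ring

end Complex

theorem phiMap_eventuallyEq {k : ℕ} {w : Fin k → ℂ} (h0 : ∀ i, w i ≠ 0) :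
    PhiMap k =ᶠ[nhds w] fun w' j => ∑ i, polarPow (j + 1) (w' i) := by
  have hne : ∀ᶠ w' in nhds w, ∀ i, w' i ≠ 0 :=
    Filter.eventually_all.mpr fun i => (continuous_apply i).continuousAt.eventually_ne (h0 i)
  filter_upwards [hne] with w' hw'
  funext j
  simp [PhiMap, polarPow, hw']

theorem hasFDerivAt_phiMap {k : ℕ} {w : Fin k → ℂ} (h0 : ∀ i, w i ≠ 0) :
    HasFDerivAt (PhiMap k) (ContinuousLinearMap.pi fun j : Fin k =>
      ∑ i, (polarPowDeriv (j + 1) (w i / ‖w i‖)).comp (ContinuousLinearMap.proj i)) w := by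
  refine HasFDerivAt.congr_of_eventuallyEq ?_ (phiMap_eventuallyEq h0)
  refine hasFDerivAt_pi.mpr fun j => HasFDerivAt.fun_sum fun i _ => ?_
  exact (hasFDerivAt_polarPow _ (h0 i)).comp w (hasFDerivAt_apply (𝕜 := ℝ) i w)

/-- Lemma 3.5 of Bartolucci–Malchiodi: the Jacobian determinant of `Φ_k`, viewed
as a map of `ℝ^{2k}` (i.e. the determinant of its real Fréchet derivative), is
nonzero at every `w` with all `w_i ≠ 0` and pairwise distinct arguments
(`w_i/|w_i| ≠ w_j/|w_j|` for `i ≠ j`). -/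
theorem stmt_4 (k : ℕ) (w : Fin k → ℂ) (h0 : ∀ i, w i ≠ 0)
    (harg : ∀ i j, i ≠ j → w i / (‖w i‖ : ℂ) ≠ w j / (‖w j‖ : ℂ)) :
    LinearMap.det ((fderiv ℝ (PhiMap k) w).toLinearMap) ≠ 0 := by
  set u : Fin k → ℂ := fun i => w i / ‖w i‖
  have hu (i : Fin k) : ‖u i‖ = 1 := by simp [u, h0 i]
  have hinj : Function.Injective u := fun i j hij => by_contra fun hne => harg i j hne hij
  rw [(hasFDerivAt_phiMap h0).fderiv, Ne, LinearMap.det_eq_zero_iff_ker_ne_bot, not_not,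
    LinearMap.ker_eq_bot']
  intro v hv
  obtain ⟨ha, hb⟩ := eq_zero_of_sum_mul_pow_eq_zero hu hinj
    (a := fun i => (conj (u i) * v i).re) (b := fun i => (conj (u i) * v i).im)
    fun n hn hnk => by
      obtain ⟨j, rfl⟩ : ∃ j : Fin k, n = j + 1 := ⟨⟨n - 1, by simp at hnk; omega⟩, by simp; omega⟩
      have := congr_fun hv j
      simp only [ContinuousLinearMap.coe_coe, ContinuousLinearMap.pi_apply, _root_.sum_apply,
        ContinuousLinearMap.comp_apply, ContinuousLinearMap.proj_apply, polarPowDeriv_apply,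
        Pi.zero_apply] at this
      exact_mod_cast this
  funext i
  have h : conj (u i) * v i = 0 := Complex.ext (congr_fun ha i) (congr_fun hb i)
  simpa [u, h0 i] using h
end

section
/- Let t₁, …, t_k > 0 with Σ t_i = 1 and let θ₁, …, θ_k ∈ [0, 2π) be pairwise distinct. Suppose also s₁, …, s_k > 0 with Σ s_j = 1 and φ₁, …, φ_k ∈ [0, 2π) pairwise distinct. If Σ_i t_i e^{i m θ_i} = Σ_j s_j e^{i m φ_j} for all m = 0, 1, …, k, then the measures Σ t_i δ_{θ_i} and Σ s_j δ_{φ_j} coincide, i.e. there is a permutation π of {1,…,k} with φ_{π(i)} = θ_i and s_{π(i)} = t_i for all i. -/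
open Complex

open scoped Classical in
lemma aux_exp_inj {a b : ℝ} (ha : a ∈ Set.Ico (0:ℝ) (2*Real.pi))
    (hb : b ∈ Set.Ico (0:ℝ) (2*Real.pi))
    (h : Complex.exp (Complex.I * a) = Complex.exp (Complex.I * b)) : a = b := by
  rw [Complex.exp_eq_exp_iff_exists_int] at h
  obtain ⟨n, hn⟩ := h
  have h2 : Complex.I * (a : ℂ) = Complex.I * ((b + n * (2*Real.pi) : ℝ) : ℂ) := by
    rw [hn]; push_cast; ring
  have h3 := mul_left_cancel₀ Complex.I_ne_zero h2
  have h4 : a = b + n * (2*Real.pi) := by exact_mod_cast h3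
  have hπ := Real.pi_pos
  have hn0 : n = 0 := by
    rcases ha with ⟨ha0, ha2⟩; rcases hb with ⟨hb0, hb2⟩
    have h5 : (n:ℝ) < 1 := by nlinarith
    have h6 : (-1:ℝ) < (n:ℝ) := by nlinarith
    have h5' : n < 1 := by exact_mod_cast h5
    have h6' : -1 < n := by exact_mod_cast h6
    omega
  rw [h4, hn0]; push_cast; ring

open scoped Classical in
lemma aux_fiber {k : ℕ} (f : Fin k → ℂ) (t : Fin k → ℂ) (A : Finset ℂ)
    (hA : ∀ i, f i ∈ A) (F : ℂ → ℂ) :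
    ∑ a ∈ A, (∑ i ∈ Finset.univ.filter (fun i => f i = a), t i) * F a
      = ∑ i, t i * F (f i) := by
  rw [← Finset.sum_fiberwise_of_maps_to (fun i _ => hA i) (fun i => t i * F (f i))]
  refine Finset.sum_congr rfl fun a _ => ?_
  rw [Finset.sum_mul]
  refine Finset.sum_congr rfl fun i hi => ?_
  rw [(Finset.mem_filter.mp hi).2]

/-- Injectivity of the moment map `F_k` on `k`-barycenters of `S¹` with full support
(Bartolucci–Malchiodi, Proposition 3.2): if two discrete probability measures with
`k` distinct atoms each have the same moments of order `0, 1, …, k`, they coincide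
up to a permutation of the atoms. -/
theorem stmt_19 (k : ℕ) (t s θ φ : Fin k → ℝ)
    (ht0 : ∀ i, 0 < t i) (ht1 : ∑ i, t i = 1)
    (hs0 : ∀ j, 0 < s j) (hs1 : ∑ j, s j = 1)
    (hθr : ∀ i, θ i ∈ Set.Ico (0 : ℝ) (2 * Real.pi)) (hθ : Function.Injective θ)
    (hφr : ∀ j, φ j ∈ Set.Ico (0 : ℝ) (2 * Real.pi)) (hφ : Function.Injective φ)
    (hmom : ∀ m : ℕ, m ≤ k →
      (∑ i, (t i : ℂ) * Complex.exp ((m : ℂ) * Complex.I * (θ i : ℂ))) =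
      (∑ j, (s j : ℂ) * Complex.exp ((m : ℂ) * Complex.I * (φ j : ℂ)))) :
    ∃ π : Equiv.Perm (Fin k), ∀ i, φ (π i) = θ i ∧ s (π i) = t i := by
  classical
  set z : Fin k → ℂ := fun i => Complex.exp (Complex.I * θ i) with hzdef
  set w : Fin k → ℂ := fun j => Complex.exp (Complex.I * φ j) with hwdef
  have hzinj : Function.Injective z := fun i i' h => hθ (aux_exp_inj (hθr i) (hθr i') h)
  have hwinj : Function.Injective w := fun j j' h => hφ (aux_exp_inj (hφr j) (hφr j') h)
  -- integer moments via conjugation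
  have hconj : ∀ (n : ℕ) (r ψ : ℝ),
      (starRingEnd ℂ) ((r:ℂ) * Complex.exp ((n:ℂ) * Complex.I * ψ))
        = (r:ℂ) * Complex.exp ((((-(n:ℤ)):ℤ):ℂ) * (Complex.I * ψ)) := by
    intro n r ψ
    rw [map_mul, Complex.conj_ofReal, ← Complex.exp_conj]
    congr 2
    rw [map_mul, map_mul, Complex.conj_I, Complex.conj_ofReal, map_natCast]
    push_cast; ring
  have hmomZ : ∀ m : ℤ, m.natAbs ≤ k →
      ∑ i, (t i : ℂ) * Complex.exp ((m : ℂ) * (Complex.I * θ i))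
        = ∑ j, (s j : ℂ) * Complex.exp ((m : ℂ) * (Complex.I * φ j)) := by
    intro m hm
    obtain ⟨n, rfl | rfl⟩ := Int.eq_nat_or_neg m
    · have hn : n ≤ k := by simpa using hm
      have h0 := hmom n hn
      calc ∑ i, (t i : ℂ) * Complex.exp (((n:ℤ) : ℂ) * (Complex.I * θ i))
          = ∑ i, (t i : ℂ) * Complex.exp ((n : ℂ) * Complex.I * θ i) := by
            refine Finset.sum_congr rfl fun i _ => ?_; congr 1; push_cast; ring
        _ = ∑ j, (s j : ℂ) * Complex.exp ((n : ℂ) * Complex.I * φ j) := h0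
        _ = ∑ j, (s j : ℂ) * Complex.exp (((n:ℤ) : ℂ) * (Complex.I * φ j)) := by
            refine Finset.sum_congr rfl fun j _ => ?_; congr 1; push_cast; ring
    · have hn : n ≤ k := by simpa using hm
      have h0 := congrArg (starRingEnd ℂ) (hmom n hn)
      rw [map_sum, map_sum] at h0
      calc ∑ i, (t i : ℂ) * Complex.exp ((((-(n:ℤ)) : ℤ) : ℂ) * (Complex.I * θ i))
          = ∑ i, (starRingEnd ℂ) ((t i : ℂ) * Complex.exp ((n:ℂ) * Complex.I * θ i)) := by
            refine Finset.sum_congr rfl fun i _ => (hconj n (t i) (θ i)).symm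
        _ = ∑ j, (starRingEnd ℂ) ((s j : ℂ) * Complex.exp ((n:ℂ) * Complex.I * φ j)) := h0
        _ = ∑ j, (s j : ℂ) * Complex.exp ((((-(n:ℤ)) : ℤ) : ℂ) * (Complex.I * φ j)) := by
            refine Finset.sum_congr rfl fun j _ => hconj n (s j) (φ j)
  -- the combined atom set
  set A : Finset ℂ := (Finset.univ.image z) ∪ (Finset.univ.image w) with hAdef
  have hzA : ∀ i, z i ∈ A := fun i =>
    Finset.mem_union_left _ (Finset.mem_image_of_mem z (Finset.mem_univ i))
  have hwA : ∀ j, w j ∈ A := fun j =>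
    Finset.mem_union_right _ (Finset.mem_image_of_mem w (Finset.mem_univ j))
  have hA0 : ∀ a ∈ A, a ≠ 0 := by
    intro a ha
    rcases Finset.mem_union.mp ha with h | h <;>
      obtain ⟨i, _, rfl⟩ := Finset.mem_image.mp h <;> exact Complex.exp_ne_zero _
  have hcard : A.card ≤ 2 * k := by
    calc A.card ≤ (Finset.univ.image z).card + (Finset.univ.image w).card :=
          Finset.card_union_le _ _
      _ ≤ Finset.univ.card + Finset.univ.card :=
          Nat.add_le_add (Finset.card_image_le) (Finset.card_image_le)
      _ = 2 * k := by simp [Finset.card_univ]; ring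
  -- the signed weights
  set c : ℂ → ℂ := fun a =>
    (∑ i ∈ Finset.univ.filter (fun i => z i = a), (t i : ℂ))
      - (∑ j ∈ Finset.univ.filter (fun j => w j = a), (s j : ℂ)) with hcdef
  -- moments of c vanish
  have hcmom : ∀ p : ℕ, p ≤ 2 * k → ∑ a ∈ A, c a * ((a ^ k)⁻¹ * a ^ p) = 0 := by
    intro p hp
    have hsplit : ∑ a ∈ A, c a * ((a ^ k)⁻¹ * a ^ p)
        = (∑ a ∈ A, (∑ i ∈ Finset.univ.filter (fun i => z i = a), (t i : ℂ))
              * ((a ^ k)⁻¹ * a ^ p))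
          - ∑ a ∈ A, (∑ j ∈ Finset.univ.filter (fun j => w j = a), (s j : ℂ))
              * ((a ^ k)⁻¹ * a ^ p) := by
      rw [← Finset.sum_sub_distrib]
      exact Finset.sum_congr rfl fun a _ => by rw [hcdef]; ring
    rw [hsplit, aux_fiber z (fun i => (t i : ℂ)) A hzA _,
        aux_fiber w (fun j => (s j : ℂ)) A hwA _]
    have hF : ∀ ψ : ℝ, (Complex.exp (Complex.I * ψ) ^ k)⁻¹ * Complex.exp (Complex.I * ψ) ^ p
        = Complex.exp (((((p : ℤ) - (k : ℤ)) : ℤ) : ℂ) * (Complex.I * ψ)) := by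
      intro ψ
      rw [← Complex.exp_nat_mul, ← Complex.exp_nat_mul, ← Complex.exp_neg, ← Complex.exp_add]
      congr 1; push_cast; ring
    have h1 : ∑ i, (t i : ℂ) * ((z i ^ k)⁻¹ * z i ^ p)
        = ∑ i, (t i : ℂ) * Complex.exp (((((p : ℤ) - (k : ℤ)) : ℤ) : ℂ) * (Complex.I * θ i)) :=
      Finset.sum_congr rfl fun i _ => by rw [hzdef]; exact congrArg _ (hF (θ i))
    have h2 : ∑ j, (s j : ℂ) * ((w j ^ k)⁻¹ * w j ^ p)
        = ∑ j, (s j : ℂ) * Complex.exp (((((p : ℤ) - (k : ℤ)) : ℤ) : ℂ) * (Complex.I * φ j)) :=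
      Finset.sum_congr rfl fun j _ => by rw [hwdef]; exact congrArg _ (hF (φ j))
    rw [h1, h2, hmomZ ((p : ℤ) - (k : ℤ)) (by omega), sub_self]
  -- enumerate A
  set n : ℕ := A.card with hndef
  set e : A ≃ Fin n := A.equivFin with hedef
  set x : Fin n → ℂ := fun q => ((e.symm q : A) : ℂ) with hxdef
  have hxinj : Function.Injective x := fun q q' h =>
    e.symm.injective (Subtype.coe_injective h)
  have hxA : ∀ q, x q ∈ A := fun q => (e.symm q).2
  set d : Fin n → ℂ := fun q => c (x q) * ((x q) ^ k)⁻¹ with hddef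
  have hd0 : d = 0 := by
    apply Matrix.eq_zero_of_forall_pow_sum_mul_pow_eq_zero hxinj
    intro p
    have hconv : ∑ q, d q * x q ^ (p : ℕ) = ∑ a ∈ A, c a * ((a ^ k)⁻¹ * a ^ (p : ℕ)) := by
      rw [← Finset.sum_coe_sort A (fun a => c a * (((a : ℂ) ^ k)⁻¹ * (a : ℂ) ^ (p : ℕ)))]
      rw [← Equiv.sum_comp e.symm
        (fun a : A => c (a : ℂ) * (((a : ℂ) ^ k)⁻¹ * (a : ℂ) ^ (p : ℕ)))]
      exact Finset.sum_congr rfl fun q _ => by rw [hddef]; ring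
    rw [hconv]
    exact hcmom p (by have := p.2; omega)
  have hcA : ∀ a ∈ A, c a = 0 := by
    intro a ha
    have hx : x (e ⟨a, ha⟩) = a := by rw [hxdef]; simp
    have := congrFun hd0 (e ⟨a, ha⟩)
    rw [hddef] at this
    simp only [Pi.zero_apply] at this
    rw [hx] at this
    rcases mul_eq_zero.mp this with h | h
    · exact h
    · exact absurd h (inv_ne_zero (pow_ne_zero _ (hA0 a ha)))
  -- extract the matching
  have hex : ∀ i, ∃ j, w j = z i ∧ s j = t i := by
    intro i
    have hci := hcA (z i) (hzA i)
    have hfz : Finset.univ.filter (fun i' => z i' = z i) = {i} := by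
      ext i'; simp [hzinj.eq_iff]
    rw [hcdef] at hci
    simp only [hfz, Finset.sum_singleton] at hci
    have hsum : (t i : ℂ) = ∑ j ∈ Finset.univ.filter (fun j => w j = z i), (s j : ℂ) := by
      linear_combination hci
    have hne : (Finset.univ.filter (fun j => w j = z i)).Nonempty := by
      by_contra hne
      rw [Finset.not_nonempty_iff_eq_empty.mp hne, Finset.sum_empty] at hsum
      have : t i = 0 := by exact_mod_cast hsum
      exact absurd this (ne_of_gt (ht0 i))
    obtain ⟨j, hj⟩ := hne
    have hwj : w j = z i := (Finset.mem_filter.mp hj).2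
    have hfw : Finset.univ.filter (fun j' => w j' = z i) = {j} := by
      ext j'
      simp only [Finset.mem_filter, Finset.mem_univ, true_and, Finset.mem_singleton]
      constructor
      · intro h; exact hwinj (h.trans hwj.symm)
      · intro h; rw [h]; exact hwj
    rw [hfw, Finset.sum_singleton] at hsum
    exact ⟨j, hwj, by exact_mod_cast hsum.symm⟩
  choose π₀ hπ1 hπ2 using hex
  have hπinj : Function.Injective π₀ := fun i i' h =>
    hzinj (by rw [← hπ1 i, ← hπ1 i', h])
  refine ⟨Equiv.ofBijective π₀ (Finite.injective_iff_bijective.mp hπinj), fun i => ⟨?_, ?_⟩⟩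
  · exact aux_exp_inj (hφr (π₀ i)) (hθr i) (hπ1 i)
  · exact hπ2 i
end
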